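/- For all 0 < p < 1/4 there exists a positive integer r_0 = r_0(p) such that for all r ≥ r_0 and all n > 2r+1, E_p[X_0(n,r)] < 1/4. -/

import Mathlib

open Finset


/-- Number of active neighbors of vertex `i` in the ring `C_n(r)`.
For `n > 2r+1` the `2r` offsets `±1, …, ±r` give pairwise distinct neighbors. -/
def activeNbrs (n r : ℕ) (σ : ZMod n → Bool) (i : ZMod n) : ℕ :=
  ∑ k ∈ Finset.Icc 1 r,
    ((if σ (i + (k : ZMod n)) then 1 else 0) + (if σ (i - (k : ZMod n)) then 1 else 0))

/-- One synchronous step of strict majority bootstrap percolation on `C_n(r)`: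
a passive vertex (degree `2r`) becomes active iff at least `r+1 = ⌈(2r+1)/2⌉`
of its neighbors are active; active vertices stay active. -/
def ringStep (n r : ℕ) (σ : ZMod n → Bool) : ZMod n → Bool :=
  fun i => σ i || decide (r + 1 ≤ activeNbrs n r σ i)

/-- The fixed point of strict MBP on `C_n(r)`; `n` monotone steps suffice to stabilize. -/
def ringFix (n r : ℕ) (σ : ZMod n → Bool) : ZMod n → Bool :=
  (ringStep n r)^[n] σ

/-- Probability of an event under i.i.d. Bernoulli(`p`) initial states. -/
noncomputable def pr {V : Type} [Fintype V] [DecidableEq V] (p : ℝ) (S : Set (V → Bool)) : ℝ :=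
  ∑ σ : V → Bool, S.indicator (fun τ => ∏ v, (if τ v then p else 1 - p)) σ

/-- Expectation of a random variable under i.i.d. Bernoulli(`p`) initial states. -/
noncomputable def expec {V : Type} [Fintype V] [DecidableEq V]
    (p : ℝ) (f : (V → Bool) → ℝ) : ℝ :=
  ∑ σ : V → Bool, f σ * ∏ v, (if σ v then p else 1 - p)

/-- `E_p[X_0(n,r)]`: probability that vertex `0` is active at the fixed point. -/
noncomputable def Ex (r : ℕ) (p : ℝ) (n : ℕ) : ℝ :=
  if h : n = 0 then 0 else
    haveI : NeZero n := ⟨h⟩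
    pr p {σ : ZMod n → Bool | ringFix n r σ 0 = true}

/-- `p_R(n,r,p)`: probability that strictly more than half of the `n` vertices are
active at the fixed point of strict MBP on `C_n(r)`. -/
noncomputable def pR (r : ℕ) (p : ℝ) (n : ℕ) : ℝ :=
  if h : n = 0 then 0 else
    haveI : NeZero n := ⟨h⟩
    pr p {σ : ZMod n → Bool |
      n < 2 * (Finset.univ.filter (fun i : ZMod n => ringFix n r σ i = true)).card}

/-!
If vertex `0` is passive initially but active at the fixed point, then, with `D = T (r + 1)`,
the initial configuration has one of the following:
(i) every one of the `T` consecutive blocks of `r + 1` vertices to the left of `0` contains an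
active vertex, or the same holds to the right;
(ii) some vertex within distance `D` of `0` has at least `r + 1` active neighbours.
Otherwise the segment between a passive block on each side is frozen: every vertex of an end block
keeps `r` passive neighbours inside its block, and no interior vertex ever reaches the threshold.
If `n ≤ 2D + 1`, (ii) alone suffices, since then a configuration violating it is already fixed.

With `q = (1 - p) ^ (r + 1)`, (i) has probability at most `2 (1 - q) ^ T` (the blocks are disjoint,
hence independent) and (ii) at most `(2D + 1) (p / (1 - p)) ^ (r + 1) (2 (1 - p)) ^ (2r)`
(Chernoff), which is `q p (4p) ^ r / (1 - p) ^ 2` per vertex. Taking `T ≈ 2 / (δ q)` makes the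
first at most `δ` and the second `O_δ(r (4p) ^ r)`, so `E_p[X_0] ≤ p + δ + o(1)` as `r → ∞`.
-/

open Filter Topology

section Probability

variable {V : Type} [Fintype V] {p : ℝ}

lemma prod_weight_nonneg (hp0 : 0 ≤ p) (hp1 : p ≤ 1) (σ : V → Bool) :
    0 ≤ ∏ v, (if σ v then p else 1 - p) :=
  prod_nonneg fun v _ => by split <;> linarith

variable [DecidableEq V]

lemma expec_mono (hp0 : 0 ≤ p) (hp1 : p ≤ 1) {f g : (V → Bool) → ℝ} (h : ∀ σ, f σ ≤ g σ) :
    expec p f ≤ expec p g :=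
  sum_le_sum fun σ _ => mul_le_mul_of_nonneg_right (h σ) (prod_weight_nonneg hp0 hp1 σ)

lemma expec_sum {ι : Type*} (s : Finset ι) (f : ι → (V → Bool) → ℝ) :
    expec p (fun σ => ∑ i ∈ s, f i σ) = ∑ i ∈ s, expec p (f i) := by
  simp only [expec, sum_mul]
  exact sum_comm

lemma expec_const_mul (c : ℝ) (f : (V → Bool) → ℝ) :
    expec p (fun σ => c * f σ) = c * expec p f := by
  simp only [expec, mul_sum, mul_assoc]

lemma expec_prod_apply (A : Finset V) (g : V → Bool → ℝ) :
    expec p (fun σ => ∏ v ∈ A, g v (σ v)) =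
      ∏ v ∈ A, (p * g v true + (1 - p) * g v false) := by
  have hext : ∀ σ : V → Bool, (∏ v ∈ A, g v (σ v)) * ∏ v, (if σ v then p else 1 - p) =
      ∏ v, (if v ∈ A then g v (σ v) else 1) * (if σ v then p else 1 - p) := by
    intro σ
    rw [prod_mul_distrib, Fintype.prod_ite_mem]
  rw [expec, sum_congr rfl fun σ _ => hext σ,
    ← Fintype.prod_sum fun v b => (if v ∈ A then g v b else 1) * (if b then p else 1 - p),
    ← Fintype.prod_ite_mem A]
  refine prod_congr rfl fun v _ => ?_
  split <;> simp [mul_comm]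

lemma pr_eq_expec_indicator (S : Set (V → Bool)) : pr p S = expec p (S.indicator 1) := by
  unfold pr expec
  refine sum_congr rfl fun σ _ => ?_
  by_cases h : σ ∈ S <;> simp [h]

lemma pr_le_expec (hp0 : 0 ≤ p) (hp1 : p ≤ 1) {S : Set (V → Bool)} {f : (V → Bool) → ℝ}
    (hf0 : ∀ σ, 0 ≤ f σ) (hf : ∀ σ ∈ S, 1 ≤ f σ) : pr p S ≤ expec p f := by
  rw [pr_eq_expec_indicator]
  refine expec_mono hp0 hp1 fun σ => ?_
  by_cases h : σ ∈ S
  · simpa [h] using hf σ h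
  · simpa [h] using hf0 σ

lemma pr_mono (hp0 : 0 ≤ p) (hp1 : p ≤ 1) {S T : Set (V → Bool)} (h : S ⊆ T) :
    pr p S ≤ pr p T :=
  sum_le_sum fun σ _ =>
    Set.indicator_le_indicator_of_subset h (fun τ => prod_weight_nonneg hp0 hp1 τ) σ

lemma pr_union_le (hp0 : 0 ≤ p) (hp1 : p ≤ 1) (S T : Set (V → Bool)) :
    pr p (S ∪ T) ≤ pr p S + pr p T := by
  rw [pr, pr, pr, ← sum_add_distrib]
  refine sum_le_sum fun σ _ => ?_
  rw [← Set.indicator_union_add_inter_apply]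
  exact le_add_of_nonneg_right
    (Set.indicator_nonneg (fun τ _ => prod_weight_nonneg hp0 hp1 τ) σ)

lemma pr_biUnion_le (hp0 : 0 ≤ p) (hp1 : p ≤ 1) {ι : Type*} (s : Finset ι)
    (S : ι → Set (V → Bool)) : pr p (⋃ i ∈ s, S i) ≤ ∑ i ∈ s, pr p (S i) := by
  classical
  induction s using Finset.induction_on with
  | empty => simp [pr]
  | insert i s hi ih =>
    rw [set_biUnion_insert, sum_insert hi]
    exact (pr_union_le hp0 hp1 _ _).trans (add_le_add le_rfl ih)

lemma pr_apply_eq_true (v : V) : pr p {σ | σ v = true} = p := by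
  have hind : {σ : V → Bool | σ v = true}.indicator 1 =
      fun σ => ∏ u ∈ {v}, (if σ u then (1 : ℝ) else 0) := by
    funext σ
    cases h : σ v <;> simp [h]
  rw [pr_eq_expec_indicator, hind, expec_prod_apply {v} fun _ b => if b then (1 : ℝ) else 0]
  simp

-- Markov's inequality applied to `((1 - p) / p) ^ #{v ∈ A | σ v = true}`.
lemma pr_card_active_ge_le (hp0 : 0 < p) (hp : p ≤ 1 / 2) (A : Finset V) (k : ℕ) :
    pr p {σ | k ≤ #{v ∈ A | σ v = true}} ≤ (p / (1 - p)) ^ k * (2 * (1 - p)) ^ #A := by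
  set L := (1 - p) / p
  have hL : 1 ≤ L := by rw [le_div_iff₀ hp0]; linarith
  have hpow : ∀ σ : V → Bool, ∏ v ∈ A, (if σ v then L else 1) = L ^ #{v ∈ A | σ v = true} := by
    intro σ
    rw [prod_ite, prod_const, prod_const_one, mul_one]
  calc pr p {σ | k ≤ #{v ∈ A | σ v = true}}
      ≤ expec p (fun σ => (L ^ k)⁻¹ * ∏ v ∈ A, (if σ v then L else 1)) := by
        refine pr_le_expec hp0.le (by linarith) (fun σ => by rw [hpow]; positivity) ?_
        intro σ hσ
        rw [hpow, inv_mul_eq_div, one_le_div (by positivity)]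
        exact pow_le_pow_right₀ hL hσ
    _ = (p / (1 - p)) ^ k * (2 * (1 - p)) ^ #A := by
        have hpL : p * L = 1 - p := by simp only [L]; field_simp
        have hLinv : L⁻¹ = p / (1 - p) := inv_div _ _
        rw [expec_const_mul, expec_prod_apply A fun _ b => if b then L else 1, prod_const,
          ← inv_pow, hLinv]
        simp only [if_true, Bool.false_eq_true, if_false, hpL]
        ring

lemma pr_forall_exists_eq {ι : Type*} [DecidableEq ι] (s : Finset ι) (B : ι → Finset V)
    (hB : (s : Set ι).PairwiseDisjoint B) :
    pr p {σ | ∀ t ∈ s, ∃ v ∈ B t, σ v = true} = ∏ t ∈ s, (1 - (1 - p) ^ #(B t)) := by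
  set Z : ι → (V → Bool) → ℝ := fun t σ => ∏ v ∈ B t, (if σ v then 0 else 1)
  have hind : {σ | ∀ t ∈ s, ∃ v ∈ B t, σ v = true}.indicator 1 =
      fun σ => ∏ t ∈ s, (1 + -Z t σ) := by
    funext σ
    simp only [Set.indicator_apply, Set.mem_ofPred_eq, Pi.one_apply]
    split_ifs with h
    · refine (prod_eq_one fun t ht => ?_).symm
      obtain ⟨v, hv, hσ⟩ := h t ht
      have hZ : Z t σ = 0 := prod_eq_zero hv (by simp [hσ])
      simp [hZ]
    · push Not at h
      obtain ⟨t, ht, hσ⟩ := h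
      have hZ : Z t σ = 1 := prod_eq_one fun v hv => by simp [hσ v hv]
      exact (prod_eq_zero ht (by simp [hZ])).symm
  have hsub : ∀ A ∈ s.powerset,
      expec p (fun σ => ∏ t ∈ A, -Z t σ) = ∏ t ∈ A, -(1 - p) ^ #(B t) := by
    intro A hA
    have hA : (A : Set ι).PairwiseDisjoint B := hB.subset (by simpa using hA)
    simp only [Z, prod_neg, ← prod_biUnion hA]
    rw [expec_const_mul, expec_prod_apply _ fun _ b => if b then (0 : ℝ) else 1]
    simp [prod_const, card_biUnion hA, ← prod_pow_eq_pow_sum]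
  rw [pr_eq_expec_indicator, hind]
  simp only [prod_one_add]
  rw [expec_sum, sum_congr rfl hsub, ← prod_one_add]
  simp [sub_eq_add_neg]

end Probability

lemma ZMod.natCast_injOn_Iio (n : ℕ) : Set.InjOn (Nat.cast : ℕ → ZMod n) (Set.Iio n) := by
  intro a ha b hb h
  simpa [Nat.mod_eq_of_lt ha, Nat.mod_eq_of_lt hb] using (ZMod.natCast_eq_natCast_iff' a b n).1 h

section Ring

variable {n r : ℕ}

def nbhd (n r : ℕ) (i : ZMod n) : Finset (ZMod n) :=
  (Icc 1 r).image (fun k : ℕ => i + k) ∪ (Icc 1 r).image (fun k : ℕ => i - k)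

lemma mem_nbhd {i v : ZMod n} : v ∈ nbhd n r i ↔ ∃ k ∈ Icc 1 r, v = i + k ∨ v = i - k := by
  simp only [nbhd, mem_union, mem_image]
  constructor
  · rintro (⟨k, hk, rfl⟩ | ⟨k, hk, rfl⟩)
    exacts [⟨k, hk, .inl rfl⟩, ⟨k, hk, .inr rfl⟩]
  · rintro ⟨k, hk, rfl | rfl⟩
    exacts [.inl ⟨k, hk, rfl⟩, .inr ⟨k, hk, rfl⟩]

lemma activeNbrs_congr {σ τ : ZMod n → Bool} {i : ZMod n} (h : ∀ v ∈ nbhd n r i, σ v = τ v) :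
    activeNbrs n r σ i = activeNbrs n r τ i :=
  sum_congr rfl fun k hk => by
    rw [h _ (mem_nbhd.2 ⟨k, hk, .inl rfl⟩), h _ (mem_nbhd.2 ⟨k, hk, .inr rfl⟩)]

lemma add_natCast_injOn (hn : 2 * r + 1 ≤ n) (i : ZMod n) :
    Set.InjOn (fun k : ℕ => i + k) (Icc 1 r) := fun a ha b hb h => by
  simp only [coe_Icc, Set.mem_Icc] at ha hb
  exact ZMod.natCast_injOn_Iio n (by simp; omega) (by simp; omega) (add_left_cancel h)

lemma sub_natCast_injOn (hn : 2 * r + 1 ≤ n) (i : ZMod n) :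
    Set.InjOn (fun k : ℕ => i - k) (Icc 1 r) := fun a ha b hb h => by
  simp only [coe_Icc, Set.mem_Icc] at ha hb
  exact ZMod.natCast_injOn_Iio n (by simp; omega) (by simp; omega) (sub_right_injective h)

lemma disjoint_image_add_image_sub (hn : 2 * r + 1 ≤ n) (i : ZMod n) :
    Disjoint ((Icc 1 r).image fun k : ℕ => i + k) ((Icc 1 r).image fun k : ℕ => i - k) := by
  simp only [disjoint_left, mem_image, mem_Icc, not_exists, not_and]
  rintro _ ⟨a, ha, rfl⟩ b hb hab
  have hdvd : n ∣ a + b := by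
    rw [← ZMod.natCast_eq_zero_iff, Nat.cast_add]
    linear_combination -hab
  exact absurd (Nat.le_of_dvd (by omega) hdvd) (by omega)

lemma activeNbrs_eq_card_filter (hn : 2 * r + 1 ≤ n) (σ : ZMod n → Bool) (i : ZMod n) :
    activeNbrs n r σ i = #{v ∈ nbhd n r i | σ v = true} := by
  rw [card_filter, nbhd, sum_union (disjoint_image_add_image_sub hn i),
    sum_image (add_natCast_injOn hn i), sum_image (sub_natCast_injOn hn i), ← sum_add_distrib]
  rfl

lemma card_nbhd (hn : 2 * r + 1 ≤ n) (i : ZMod n) : #(nbhd n r i) = 2 * r := by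
  rw [nbhd, card_union_of_disjoint (disjoint_image_add_image_sub hn i),
    card_image_of_injOn (add_natCast_injOn hn i), card_image_of_injOn (sub_natCast_injOn hn i),
    Nat.card_Icc]
  omega

lemma pr_activeNbrs_ge_le [NeZero n] {p : ℝ} (hp0 : 0 < p) (hp : p ≤ 1 / 2)
    (hn : 2 * r + 1 ≤ n) (i : ZMod n) :
    pr p {σ | r + 1 ≤ activeNbrs n r σ i} ≤ (p / (1 - p)) ^ (r + 1) * (2 * (1 - p)) ^ (2 * r) := by
  simpa only [activeNbrs_eq_card_filter hn, card_nbhd hn] using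
    pr_card_active_ge_le hp0 hp (nbhd n r i) (r + 1)

lemma sum_boole_Icc_le {f : ℕ → Bool} {c : ℕ} (h : ∀ k ≤ c, f k = false) (r : ℕ) :
    (∑ k ∈ Icc 1 r, if f k then 1 else 0) ≤ r - c := by
  rw [← card_filter, ← Nat.card_Ioc]
  refine card_le_card fun k hk => ?_
  simp only [mem_filter, mem_Icc, mem_Ioc] at hk ⊢
  by_contra hck
  simp [h k (by omega)] at hk

lemma activeNbrs_le_of_passive_run {σ : ZMod n → Bool} {s : ZMod n}
    (hrun : ∀ k ≤ r, σ (s + k) = false) {j : ℕ} (hj : j ≤ r) : activeNbrs n r σ (s + j) ≤ r := by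
  have hright := sum_boole_Icc_le (f := fun k => σ (s + j + k)) (c := r - j)
    (fun k hk => by rw [add_assoc, ← Nat.cast_add]; exact hrun _ (by omega)) r
  have hleft := sum_boole_Icc_le (f := fun k => σ (s + j - k)) (c := j)
    (fun k hk => by rw [add_sub_assoc, ← Nat.cast_sub hk]; exact hrun _ (by omega)) r
  rw [activeNbrs, sum_add_distrib]
  omega

lemma ringStep_apply_eq_self {σ : ZMod n → Bool} {i : ZMod n} (h : activeNbrs n r σ i ≤ r) :
    ringStep n r σ i = σ i := by
  simp [ringStep, show ¬ r + 1 ≤ activeNbrs n r σ i by omega]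

lemma ringFix_eq_self {σ : ZMod n → Bool} (h : ∀ i, activeNbrs n r σ i ≤ r) :
    ringFix n r σ = σ :=
  Function.iterate_fixed (funext fun _ => ringStep_apply_eq_self (h _)) n

/-- Each vertex of an end run keeps at least `r` passive neighbours inside that run, and the
interior vertices see only the frozen segment. -/
lemma iterate_ringStep_eq_of_passive_ends {σ : ZMod n → Bool} {s : ZMod n} {d : ℕ}
    (hleft : ∀ k ≤ r, σ (s + k) = false) (hright : ∀ k ≤ r, σ (s + (d + k : ℕ)) = false)
    (hmid : ∀ j, r < j → j < d → activeNbrs n r σ (s + j) ≤ r) (t : ℕ) :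
    ∀ j ≤ d + r, (ringStep n r)^[t] σ (s + j) = σ (s + j) := by
  induction t with
  | zero => intro j _; rfl
  | succ t ih =>
    intro j hj
    rw [Function.iterate_succ_apply', ringStep_apply_eq_self, ih j hj]
    rcases (show j ≤ r ∨ d ≤ j ∨ (r < j ∧ j < d) by omega) with hjr | hdj | ⟨hrj, hjd⟩
    · exact activeNbrs_le_of_passive_run (fun k hk => by rw [ih k (by omega)]; exact hleft k hk) hjr
    · have hrun : ∀ k ≤ r, (ringStep n r)^[t] σ (s + d + k) = false := fun k hk => by
        rw [add_assoc, ← Nat.cast_add, ih _ (by omega)]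
        exact hright k hk
      simpa [add_assoc, ← Nat.cast_add, Nat.add_sub_cancel' hdj] using
        activeNbrs_le_of_passive_run hrun (j := j - d) (by omega)
    · rw [activeNbrs_congr fun v hv => ?_]
      · exact hmid j hrj hjd
      obtain ⟨k, hk, rfl | rfl⟩ := mem_nbhd.1 hv <;> rw [mem_Icc] at hk
      · rw [add_assoc, ← Nat.cast_add, ih _ (by omega)]
      · rw [add_sub_assoc, ← Nat.cast_sub (by omega), ih _ (by omega)]

lemma ringFix_zero_eq_false_of_passive_ends {σ : ZMod n → Bool} {c c' : ℕ} (h0 : σ 0 = false)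
    (hleft : ∀ x, c < x → x ≤ c + r + 1 → σ (-(x : ZMod n)) = false)
    (hright : ∀ x, c' < x → x ≤ c' + r + 1 → σ x = false)
    (hmid : ∀ z : ℤ, -c ≤ z → z ≤ c' → activeNbrs n r σ z ≤ r) :
    ringFix n r σ 0 = false := by
  have hseg := iterate_ringStep_eq_of_passive_ends (r := r) (σ := σ)
    (s := -((c + r + 1 : ℕ) : ZMod n)) (d := c + r + 1 + c' + 1)
    (fun k hk => by
      convert hleft (c + r + 1 - k) (by omega) (by omega) using 2
      rw [Nat.cast_sub (by omega)]
      ring)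
    (fun k hk => by
      convert hright (c' + 1 + k) (by omega) (by omega) using 2
      push_cast
      ring)
    (fun j hrj hjd => by
      convert hmid (j - (c + r + 1 : ℕ)) (by omega) (by omega) using 2
      push_cast
      ring)
    n (c + r + 1) (by omega)
  rw [neg_add_cancel] at hseg
  rw [ringFix, hseg, h0]

def block (r t : ℕ) : Finset ℕ := Ioc (t * (r + 1)) (t * (r + 1) + r + 1)

lemma div_eq_of_mem_block {t x : ℕ} (hx : x ∈ block r t) : (x - 1) / (r + 1) = t := by
  rw [block, mem_Ioc] at hx
  exact Nat.div_eq_of_lt_le (by omega) (by rw [Nat.succ_mul]; omega)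

lemma le_of_mem_block {T t x : ℕ} (hx : x ∈ block r t) (ht : t < T) : x ≤ T * (r + 1) := by
  rw [block, mem_Ioc] at hx
  nlinarith

def everyBlockHit (n r T : ℕ) (g : ℕ → ZMod n) : Set (ZMod n → Bool) :=
  {σ | ∀ t ∈ range T, ∃ v ∈ (block r t).image g, σ v = true}

def thresholdExceededNear (n r D : ℕ) : Set (ZMod n → Bool) :=
  ⋃ z ∈ Icc (-(D : ℤ)) D, {σ | r + 1 ≤ activeNbrs n r σ z}

lemma pr_everyBlockHit [NeZero n] {p : ℝ} {T : ℕ} {g : ℕ → ZMod n} (hg : Set.InjOn g (Set.Iio n))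
    (hT : T * (r + 1) < n) : pr p (everyBlockHit n r T g) = (1 - (1 - p) ^ (r + 1)) ^ T := by
  have hsub : ∀ t ∈ range T, ((block r t : Set ℕ)) ⊆ Set.Iio n := fun t ht x hx =>
    (le_of_mem_block hx (mem_range.1 ht)).trans_lt hT
  have hdisj : (range T : Set ℕ).PairwiseDisjoint fun t => (block r t).image g := by
    intro t ht t' ht' hne
    simp only [Function.onFun, disjoint_left, mem_image]
    rintro _ ⟨x, hx, rfl⟩ ⟨y, hy, hxy⟩
    rw [hg (hsub t' ht' hy) (hsub t ht hx) hxy] at hy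
    exact hne ((div_eq_of_mem_block hx).symm.trans (div_eq_of_mem_block hy))
  have hcard : ∀ t ∈ range T, #((block r t).image g) = r + 1 := fun t ht => by
    rw [card_image_of_injOn (hg.mono (hsub t ht)), block, Nat.card_Ioc]
    omega
  rw [everyBlockHit, pr_forall_exists_eq _ _ hdisj, prod_congr rfl fun t ht => by rw [hcard t ht],
    prod_const, card_range]

lemma pr_thresholdExceededNear_le [NeZero n] {p : ℝ} (hp0 : 0 < p) (hp : p ≤ 1 / 2)
    (hn : 2 * r + 1 ≤ n) (D : ℕ) :
    pr p (thresholdExceededNear n r D) ≤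
      (2 * D + 1) * ((p / (1 - p)) ^ (r + 1) * (2 * (1 - p)) ^ (2 * r)) := by
  refine (pr_biUnion_le hp0.le (by linarith) _ _).trans ?_
  refine (sum_le_sum fun z _ => pr_activeNbrs_ge_le hp0 hp hn _).trans_eq ?_
  rw [sum_const, Int.card_Icc, nsmul_eq_mul, show (D + 1 - -D : ℤ).toNat = 2 * D + 1 by omega]
  push_cast
  ring

lemma exists_mem_Icc_intCast_eq [NeZero n] {D : ℕ} (h : n ≤ 2 * D + 1) (x : ZMod n) :
    ∃ z ∈ Icc (-(D : ℤ)) D, (z : ZMod n) = x := by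
  have hx := ZMod.val_lt x
  by_cases hxD : x.val ≤ D
  · exact ⟨x.val, by simp only [mem_Icc]; omega, by simp⟩
  · exact ⟨x.val - n, by simp only [mem_Icc]; omega, by simp⟩

lemma setOf_ringFix_zero_subset_of_le [NeZero n] {D : ℕ} (h : n ≤ 2 * D + 1) :
    {σ | ringFix n r σ 0 = true} ⊆ {σ | σ 0 = true} ∪ thresholdExceededNear n r D := by
  intro σ hσ
  by_contra hnot
  simp only [thresholdExceededNear, Set.mem_union, Set.mem_iUnion, Set.mem_ofPred_eq, not_or,
    not_exists, not_le] at hnot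
  have hfix : ringFix n r σ = σ := ringFix_eq_self fun i => by
    obtain ⟨z, hz, rfl⟩ := exists_mem_Icc_intCast_eq h i
    exact Nat.le_of_lt_succ (hnot.2 z hz)
  exact hnot.1 (hfix ▸ hσ)

lemma setOf_ringFix_zero_subset (T : ℕ) :
    {σ | ringFix n r σ 0 = true} ⊆ {σ | σ 0 = true} ∪ everyBlockHit n r T (fun x => -(x : ZMod n))
      ∪ everyBlockHit n r T Nat.cast ∪ thresholdExceededNear n r (T * (r + 1)) := by
  intro σ hσ
  by_contra hnot
  simp only [everyBlockHit, thresholdExceededNear, Set.mem_union, Set.mem_iUnion,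
    Set.mem_ofPred_eq, not_or, not_forall, not_exists, not_le, mem_image] at hnot
  obtain ⟨⟨⟨h0, t, ht, hleft⟩, t', ht', hright⟩, hmid⟩ := hnot
  have hle : ∀ {u}, u ∈ range T → ((u * (r + 1) : ℕ) : ℤ) ≤ (T * (r + 1) : ℕ) := fun hu =>
    Int.ofNat_le.2 (Nat.mul_le_mul_right _ (mem_range.1 hu).le)
  have hfalse := ringFix_zero_eq_false_of_passive_ends (c := t * (r + 1)) (c' := t' * (r + 1))
    (Bool.eq_false_iff.2 h0)
    (fun x hx1 hx2 => Bool.eq_false_iff.2 fun h => hleft _ ⟨⟨x, mem_Ioc.2 ⟨hx1, hx2⟩, rfl⟩, h⟩)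
    (fun x hx1 hx2 => Bool.eq_false_iff.2 fun h => hright _ ⟨⟨x, mem_Ioc.2 ⟨hx1, hx2⟩, rfl⟩, h⟩)
    (fun z hz1 hz2 => Nat.le_of_lt_succ (hmid z (mem_Icc.2
      ⟨by linarith [hle ht], by linarith [hle ht']⟩)))
  simp [hfalse] at hσ

end Ring

theorem Ex_le {n r : ℕ} {p : ℝ} (hp0 : 0 < p) (hp : p ≤ 1 / 2) (hn : 2 * r + 1 ≤ n) (T : ℕ) :
    Ex r p n ≤ p + 2 * (1 - (1 - p) ^ (r + 1)) ^ T +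
      (2 * T * (r + 1) + 1) * ((p / (1 - p)) ^ (r + 1) * (2 * (1 - p)) ^ (2 * r)) := by
  have : NeZero n := ⟨by omega⟩
  have hp1 : p ≤ 1 := by linarith
  rw [Ex, dif_neg (NeZero.ne n)]
  have hWin := pr_thresholdExceededNear_le hp0 hp hn (T * (r + 1))
  have hblock : 0 ≤ (1 - (1 - p) ^ (r + 1)) ^ T :=
    pow_nonneg (sub_nonneg.2 (pow_le_one₀ (by linarith) (by linarith))) _
  push_cast at hWin
  rcases le_or_gt n (2 * (T * (r + 1)) + 1) with hsmall | hlarge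
  · calc _ ≤ pr p ({σ | σ 0 = true} ∪ thresholdExceededNear n r (T * (r + 1))) :=
          pr_mono hp0.le hp1 (setOf_ringFix_zero_subset_of_le hsmall)
      _ ≤ _ := (pr_union_le hp0.le hp1 _ _).trans (by rw [pr_apply_eq_true]; linarith)
  · have hT : T * (r + 1) < n := by omega
    have hleft := pr_everyBlockHit (p := p) (g := fun x : ℕ => -(x : ZMod n))
      (neg_injective.comp_injOn (ZMod.natCast_injOn_Iio n)) hT
    have hright := pr_everyBlockHit (p := p) (ZMod.natCast_injOn_Iio n) hT
    have hsub := pr_mono hp0.le hp1 (setOf_ringFix_zero_subset (n := n) (r := r) T)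
    set A := {σ : ZMod n → Bool | σ 0 = true}
    set L := everyBlockHit n r T fun x => -(x : ZMod n)
    set R := everyBlockHit n r T Nat.cast
    have h1 := pr_union_le hp0.le hp1 A L
    have h2 := pr_union_le hp0.le hp1 (A ∪ L) R
    have h3 := pr_union_le hp0.le hp1 (A ∪ L ∪ R) (thresholdExceededNear n r (T * (r + 1)))
    rw [pr_apply_eq_true] at h1
    linarith

lemma one_sub_pow_mul_one_add_le {q : ℝ} (hq0 : 0 ≤ q) (hq1 : q ≤ 1) (T : ℕ) :
    (1 - q) ^ T * (1 + T * q) ≤ 1 :=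
  calc (1 - q) ^ T * (1 + T * q) ≤ (1 - q) ^ T * (1 + q) ^ T :=
        mul_le_mul_of_nonneg_left (one_add_mul_le_pow (by linarith) T) (pow_nonneg (by linarith) _)
    _ = (1 - q ^ 2) ^ T := by rw [← mul_pow]; ring
    _ ≤ 1 := pow_le_one₀ (by nlinarith) (by nlinarith)

lemma exists_blockCount_error_le {p δ : ℝ} (hp0 : 0 < p) (hp1 : p < 1) (hδ : 0 < δ) (r : ℕ) :
    ∃ T : ℕ, 2 * (1 - (1 - p) ^ (r + 1)) ^ T +
        (2 * T * (r + 1) + 1) * ((p / (1 - p)) ^ (r + 1) * (2 * (1 - p)) ^ (2 * r)) ≤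
      δ + 4 * (1 / δ + 1) * (p / (1 - p) ^ 2) * ((r + 1) * (4 * p) ^ r) := by
  have hW : (p / (1 - p)) ^ (r + 1) * (2 * (1 - p)) ^ (2 * r) =
      (1 - p) ^ (r + 1) * (p / (1 - p) ^ 2 * (4 * p) ^ r) := by
    have : 1 - p ≠ 0 := by linarith
    rw [div_pow, mul_pow, pow_mul, mul_pow, div_mul_eq_mul_div, div_eq_iff (pow_ne_zero _ this)]
    field_simp
    ring
  set q := (1 - p) ^ (r + 1)
  have hq0 : 0 < q := pow_pos (by linarith) _
  have hq1 : q ≤ 1 := pow_le_one₀ (by linarith) (by linarith)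
  set X := p / (1 - p) ^ 2 * (4 * p) ^ r
  have hX : 0 ≤ X := by positivity
  refine ⟨⌈2 / (δ * q)⌉₊, ?_⟩
  set T := ⌈2 / (δ * q)⌉₊
  have hT1 : 2 / δ ≤ T * q := by
    have := mul_le_mul_of_nonneg_right (Nat.le_ceil (2 / (δ * q))) hq0.le
    rwa [div_mul_eq_mul_div, mul_div_mul_right _ _ hq0.ne'] at this
  have hT2 : (T + 1) * q ≤ 2 / δ + 2 := by
    have := mul_le_mul_of_nonneg_right (Nat.ceil_lt_add_one (by positivity : 0 ≤ 2 / (δ * q))).le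
      hq0.le
    have hq : (2 / (δ * q) + 1) * q = 2 / δ + q := by field_simp
    linarith
  have hmiss : 2 * (1 - q) ^ T ≤ δ := by
    have hpow := one_sub_pow_mul_one_add_le hq0.le hq1 T
    have hpos : 0 ≤ (1 - q) ^ T := pow_nonneg (by linarith) _
    calc 2 * (1 - q) ^ T = δ * ((1 - q) ^ T * (2 / δ)) := by field_simp
      _ ≤ δ * 1 := by gcongr; exact (mul_le_mul_of_nonneg_left (by linarith) hpos).trans hpow
      _ = δ := mul_one δ
  have hcount : (2 * T * (r + 1) + 1) * (q * X) ≤ 2 * (r + 1) * X * ((T + 1) * q) := by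
    have : 0 ≤ q * X * (2 * r + 1) := by positivity
    linarith
  have hcount' := mul_le_mul_of_nonneg_left hT2 (by positivity : (0 : ℝ) ≤ 2 * (r + 1) * X)
  have hconst : 2 * (r + 1) * X * (2 / δ + 2) =
      4 * (1 / δ + 1) * (p / (1 - p) ^ 2) * ((r + 1) * (4 * p) ^ r) := by ring
  rw [hW]
  linarith

/-- For all `0 < p < 1/4` there exists `r_0 = r_0(p)` such that for all `r ≥ r_0`
and `n > 2r+1`, `E_p[X_0(n,r)] < 1/4`. -/
theorem upper_bound_expectation (p : ℝ) (hp : 0 < p) (hp4 : p < 1 / 4) :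
    ∃ r0 : ℕ, 0 < r0 ∧ ∀ r : ℕ, r0 ≤ r → ∀ n : ℕ, 2 * r + 1 < n → Ex r p n < 1 / 4 := by
  set δ := (1 / 4 - p) / 2 with hδ
  have hδ0 : 0 < δ := by linarith
  set C := 4 * (1 / δ + 1) * (p / (1 - p) ^ 2)
  have hlim : Tendsto (fun r : ℕ => C * ((r + 1) * (4 * p) ^ r)) atTop (𝓝 0) := by
    have h4p : 4 * p < 1 := by linarith
    have h := ((tendsto_self_mul_const_pow_of_lt_one (by positivity) h4p).add
      (tendsto_pow_atTop_nhds_zero_of_lt_one (by positivity) h4p)).const_mul C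
    simpa [add_mul] using h
  obtain ⟨R, hR⟩ := eventually_atTop.1 (hlim.eventually (gt_mem_nhds hδ0))
  refine ⟨R + 1, R.succ_pos, fun r hr n hn => ?_⟩
  obtain ⟨T, hT⟩ := exists_blockCount_error_le hp (by linarith) hδ0 r
  have hEx := Ex_le hp (by linarith) hn.le T
  linarith [hR r (by omega)]
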